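/- arXiv:math-ph/0612080 — 2 statements merged into one kernel-verified Lean document; each statement's English description precedes it below -/
import Mathlib

section
/- Let n ≥ 1, κ > 0, c ∈ ℝ and b₁,…,bₙ ∈ ℝ. With J₋ = |q|², J₀ = p·q, J₊ = |p|² + Σⱼ bⱼ qⱼ⁻², x = κ + J₋, and H = (J₊ − c)/(2x), the Poisson brackets of the sl(2) generators with H are: {J₋, H} = 2J₀/x, {J₀, H} = (J₊ + 2H·(x − κ))/x, and {J₊, H} = 4H·J₀/x, at every point (q,p) with all qᵢ nonzero. -/
/-- Canonical Poisson bracket on ℝⁿ × ℝⁿ with coordinates (q, p). -/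
noncomputable def poissonBracket (n : ℕ) (f g : (Fin n → ℝ) × (Fin n → ℝ) → ℝ)
    (z : (Fin n → ℝ) × (Fin n → ℝ)) : ℝ :=
  ∑ i : Fin n,
    (fderiv ℝ f z (Pi.single i 1, 0) * fderiv ℝ g z (0, Pi.single i 1)
      - fderiv ℝ f z (0, Pi.single i 1) * fderiv ℝ g z (Pi.single i 1, 0))

noncomputable def Qc (n : ℕ) (i : Fin n) : ((Fin n → ℝ) × (Fin n → ℝ)) →L[ℝ] ℝ :=
  (ContinuousLinearMap.proj i).comp (ContinuousLinearMap.fst ℝ (Fin n → ℝ) (Fin n → ℝ))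

noncomputable def Pc (n : ℕ) (i : Fin n) : ((Fin n → ℝ) × (Fin n → ℝ)) →L[ℝ] ℝ :=
  (ContinuousLinearMap.proj i).comp (ContinuousLinearMap.snd ℝ (Fin n → ℝ) (Fin n → ℝ))

@[simp] lemma Qc_apply {n : ℕ} (i : Fin n) (v : (Fin n → ℝ) × (Fin n → ℝ)) :
    Qc n i v = v.1 i := rfl

@[simp] lemma Pc_apply {n : ℕ} (i : Fin n) (v : (Fin n → ℝ) × (Fin n → ℝ)) :
    Pc n i v = v.2 i := rfl

lemma hasQ {n : ℕ} (i : Fin n) (w : (Fin n → ℝ) × (Fin n → ℝ)) :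
    HasFDerivAt (fun z : (Fin n → ℝ) × (Fin n → ℝ) => z.1 i) (Qc n i) w :=
  (Qc n i).hasFDerivAt

lemma hasP {n : ℕ} (i : Fin n) (w : (Fin n → ℝ) × (Fin n → ℝ)) :
    HasFDerivAt (fun z : (Fin n → ℝ) × (Fin n → ℝ) => z.2 i) (Pc n i) w :=
  (Pc n i).hasFDerivAt

lemma hasSq {E : Type*} [NormedAddCommGroup E] [NormedSpace ℝ E] {f : E → ℝ}
    {D : E →L[ℝ] ℝ} {w : E} (h : HasFDerivAt f D w) :
    HasFDerivAt (fun z => f z ^ 2) ((2 * f w) • D) w := by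
  have h2 : (2 * f w) • D = f w • D + f w • D := by rw [two_mul, add_smul]
  simp only [pow_two]
  rw [h2]
  exact h.mul h

lemma hasInv {E : Type*} [NormedAddCommGroup E] [NormedSpace ℝ E] {f : E → ℝ}
    {D : E →L[ℝ] ℝ} {w : E} (h : HasFDerivAt f D w) (hf : f w ≠ 0) :
    HasFDerivAt (fun z => (f z)⁻¹) ((-(f w ^ 2)⁻¹) • D) w := by
  exact ((hasDerivAt_inv hf).comp_hasFDerivAt w h).congr_fderiv (by ext v; simp)

lemma hasJm {n : ℕ} (w : (Fin n → ℝ) × (Fin n → ℝ)) :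
    HasFDerivAt (fun z : (Fin n → ℝ) × (Fin n → ℝ) => ∑ i, z.1 i ^ 2)
      (∑ i, (2 * w.1 i) • Qc n i) w :=
  HasFDerivAt.fun_sum fun i _ => hasSq (hasQ i w)

lemma hasJ0 {n : ℕ} (w : (Fin n → ℝ) × (Fin n → ℝ)) :
    HasFDerivAt (fun z : (Fin n → ℝ) × (Fin n → ℝ) => ∑ i, z.2 i * z.1 i)
      (∑ i, (w.2 i • Qc n i + w.1 i • Pc n i)) w :=
  HasFDerivAt.fun_sum fun i _ => (hasP i w).fun_mul (hasQ i w)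

lemma hasJp {n : ℕ} (b : Fin n → ℝ) (w : (Fin n → ℝ) × (Fin n → ℝ))
    (hw : ∀ i, w.1 i ≠ 0) :
    HasFDerivAt
      (fun z : (Fin n → ℝ) × (Fin n → ℝ) => ∑ i, z.2 i ^ 2 + ∑ j, b j * (z.1 j ^ 2)⁻¹)
      ((∑ i, (2 * w.2 i) • Pc n i)
        + ∑ j, b j • ((-((w.1 j ^ 2) ^ 2)⁻¹) • ((2 * w.1 j) • Qc n j))) w := by
  refine HasFDerivAt.add (HasFDerivAt.fun_sum fun i _ => hasSq (hasP i w))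
    (HasFDerivAt.fun_sum fun j _ => ?_)
  exact (hasInv (hasSq (hasQ j w)) (pow_ne_zero 2 (hw j))).const_mul (b j)

lemma sum_sub_eq_add3 {α : Type*} (s : Finset α) (f g c1 c2 c3 : α → ℝ)
    (H : ∀ i ∈ s, f i - g i = c1 i + c2 i + c3 i) :
    ∑ i ∈ s, f i - ∑ i ∈ s, g i = (∑ i ∈ s, c1 i + ∑ i ∈ s, c2 i) + ∑ i ∈ s, c3 i := by
  have h2 := Finset.sum_congr rfl H
  rw [Finset.sum_sub_distrib, Finset.sum_add_distrib, Finset.sum_add_distrib] at h2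
  exact h2

lemma neg_sum_sub {α : Type*} (s : Finset α) (f g h : α → ℝ)
    (H : ∀ i ∈ s, -f i - g i = h i) :
    -∑ i ∈ s, f i - ∑ i ∈ s, g i = ∑ i ∈ s, h i := by
  rw [← Finset.sum_congr rfl H, Finset.sum_sub_distrib]
  simp

set_option maxHeartbeats 2000000 in
/-- With J₋ = |q|², J₀ = p·q, J₊ = |p|² + Σⱼ bⱼqⱼ⁻², x = κ + J₋ and
H = (J₊ − c)/(2x), one has {J₋, H} = 2J₀/x, {J₀, H} = (J₊ + 2H(x − κ))/x and
{J₊, H} = 4H J₀/x on Ω. -/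
theorem sl2_generators_evolution (n : ℕ) (hn : 1 ≤ n) (κ c : ℝ) (hκ : 0 < κ)
    (b : Fin n → ℝ)
    (Jm J0 Jp x H : (Fin n → ℝ) × (Fin n → ℝ) → ℝ)
    (hJm : Jm = fun z => ∑ i, z.1 i ^ 2)
    (hJ0 : J0 = fun z => ∑ i, z.2 i * z.1 i)
    (hJp : Jp = fun z => ∑ i, z.2 i ^ 2 + ∑ j, b j * (z.1 j ^ 2)⁻¹)
    (hx : x = fun z => κ + Jm z)
    (hH : H = fun z => (Jp z - c) / (2 * x z)) :
    ∀ z : (Fin n → ℝ) × (Fin n → ℝ), (∀ i, z.1 i ≠ 0) →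
      poissonBracket n Jm H z = 2 * J0 z / x z ∧
      poissonBracket n J0 H z = (Jp z + 2 * H z * (x z - κ)) / x z ∧
      poissonBracket n Jp H z = 4 * H z * J0 z / x z := by
  subst hJm hJ0 hJp hx hH
  intro z hq
  have hX : (0:ℝ) < κ + ∑ i, z.1 i ^ 2 := by positivity
  have hX0 : (κ + ∑ i, z.1 i ^ 2 : ℝ) ≠ 0 := ne_of_gt hX
  have hden : (2 * (κ + ∑ i, z.1 i ^ 2) : ℝ) ≠ 0 := by positivity
  have hJm' := hasJm z
  have hJ0' := hasJ0 z
  have hJp' := hasJp b z hq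
  have hx' : HasFDerivAt
      (fun z : (Fin n → ℝ) × (Fin n → ℝ) => 2 * (κ + ∑ i, z.1 i ^ 2))
      ((2:ℝ) • ∑ i, (2 * z.1 i) • Qc n i) z := ((hasJm z).const_add κ).const_mul 2
  have hdinv := hasInv hx' hden
  have hH' : HasFDerivAt
      (fun w : (Fin n → ℝ) × (Fin n → ℝ) =>
        ((∑ i, w.2 i ^ 2 + ∑ j, b j * (w.1 j ^ 2)⁻¹) - c) / (2 * (κ + ∑ i, w.1 i ^ 2)))
      (((∑ i, z.2 i ^ 2 + ∑ j, b j * (z.1 j ^ 2)⁻¹) - c) •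
          ((-((2 * (κ + ∑ i, z.1 i ^ 2)) ^ 2)⁻¹) • ((2:ℝ) • ∑ i, (2 * z.1 i) • Qc n i))
        + (2 * (κ + ∑ i, z.1 i ^ 2))⁻¹ •
          ((∑ i, (2 * z.2 i) • Pc n i)
            + ∑ j, b j • ((-((z.1 j ^ 2) ^ 2)⁻¹) • ((2 * z.1 j) • Qc n j)))) z := by
    simpa only [div_eq_mul_inv] using (hJp'.sub_const c).fun_mul hdinv
  refine ⟨?_, ?_, ?_⟩
  · unfold poissonBracket
    simp only [hJm'.fderiv, hJ0'.fderiv, hJp'.fderiv, hH'.fderiv]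
    simp [ContinuousLinearMap.sum_apply, ContinuousLinearMap.add_apply,
      ContinuousLinearMap.smul_apply, Pi.single_apply, Finset.sum_ite_eq',
      mul_ite, ite_mul, Finset.mul_sum]
    rw [Finset.sum_div]
    refine Finset.sum_congr rfl fun i _ => ?_
    field_simp
  · unfold poissonBracket
    simp only [hJm'.fderiv, hJ0'.fderiv, hJp'.fderiv, hH'.fderiv]
    simp [ContinuousLinearMap.sum_apply, ContinuousLinearMap.add_apply,
      ContinuousLinearMap.smul_apply, Pi.single_apply, Finset.sum_ite_eq',
      mul_ite, ite_mul, Finset.mul_sum]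
    rw [add_div, add_div, Finset.sum_div, Finset.sum_div, Finset.sum_div]
    refine sum_sub_eq_add3 _ _ _ _ _ _ fun i _ => ?_
    have hqi := hq i
    field_simp
    ring
  · unfold poissonBracket
    simp only [hJm'.fderiv, hJ0'.fderiv, hJp'.fderiv, hH'.fderiv]
    simp [ContinuousLinearMap.sum_apply, ContinuousLinearMap.add_apply,
      ContinuousLinearMap.smul_apply, Pi.single_apply, Finset.sum_ite_eq',
      mul_ite, ite_mul, Finset.mul_sum]
    rw [Finset.sum_div]
    refine neg_sum_sub _ _ _ _ fun i _ => ?_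
    have hqi := hq i
    field_simp
    ring
end

section
/- Let n ≥ 1, κ > 0, c ∈ ℝ, b₁,…,bₙ ∈ ℝ. Fix (q,p) ∈ ℝⁿ × ℝⁿ with all qᵢ ≠ 0, and set x = κ + |q|², E = 2H(q,p) where H(q,p) = (|p|² − c + Σⱼ bⱼ qⱼ⁻²)/(2(κ + |q|²)), and let C = |q|²(|p|² + Σⱼ bⱼqⱼ⁻²) − (p·q)² be the Casimir. Assume E > 0 and define α = (κ − c/E)/2 and γ² = (κ + c/E)²/4 + C/E. Then (p·q)² = E·[(x − α)² − γ²]. Consequently, along any solution of Hamilton's equations for H with energy E = 2h > 0, the radial variable x(t) = κ + |q(t)|² satisfies x²ẋ² = 4E[(x − α)² − γ²]. -/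
set_option maxHeartbeats 1000000

lemma H_fderiv (n : ℕ) (κ c : ℝ) (hκ : 0 < κ) (b : Fin n → ℝ)
    (H : (Fin n → ℝ) × (Fin n → ℝ) → ℝ)
    (hH : H = fun z =>
      ((∑ i, z.2 i ^ 2) - c + ∑ j, b j * (z.1 j ^ 2)⁻¹) / (2 * (κ + ∑ i, z.1 i ^ 2)))
    (z : (Fin n → ℝ) × (Fin n → ℝ)) (hz : ∀ i, z.1 i ≠ 0) :
    ∃ L : ((Fin n → ℝ) × (Fin n → ℝ)) →L[ℝ] ℝ, HasFDerivAt H L z ∧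
      ∀ w : (Fin n → ℝ) × (Fin n → ℝ),
        L w = (∑ i, z.2 i * w.2 i) / (κ + ∑ i, z.1 i ^ 2)
            - (∑ j, b j / z.1 j ^ 3 * w.1 j) / (κ + ∑ i, z.1 i ^ 2)
            - ((∑ i, z.2 i ^ 2) - c + ∑ j, b j * (z.1 j ^ 2)⁻¹) / (κ + ∑ i, z.1 i ^ 2) ^ 2
              * ∑ i, z.1 i * w.1 i := by
  have hx : (0:ℝ) < κ + ∑ i, z.1 i ^ 2 := by positivity
  set Lf : Fin n → ((Fin n → ℝ) × (Fin n → ℝ)) →L[ℝ] ℝ := fun i =>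
    (ContinuousLinearMap.proj i).comp (ContinuousLinearMap.fst ℝ (Fin n → ℝ) (Fin n → ℝ))
    with hLf
  set Ls : Fin n → ((Fin n → ℝ) × (Fin n → ℝ)) →L[ℝ] ℝ := fun i =>
    (ContinuousLinearMap.proj i).comp (ContinuousLinearMap.snd ℝ (Fin n → ℝ) (Fin n → ℝ))
    with hLs
  have hfi : ∀ i, HasFDerivAt (fun y : (Fin n → ℝ) × (Fin n → ℝ) => y.1 i) (Lf i) z :=
    fun i => (Lf i).hasFDerivAt
  have hsi : ∀ i, HasFDerivAt (fun y : (Fin n → ℝ) × (Fin n → ℝ) => y.2 i) (Ls i) z :=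
    fun i => (Ls i).hasFDerivAt
  have hq2 : ∀ i, HasFDerivAt (fun y : (Fin n → ℝ) × (Fin n → ℝ) => y.1 i ^ 2)
      (((2:ℕ) * z.1 i ^ 1) • Lf i) z := fun i =>
    (hasDerivAt_pow 2 (z.1 i)).comp_hasFDerivAt (h₂ := fun x => x ^ 2) z (hfi i)
  have hp2 : ∀ i, HasFDerivAt (fun y : (Fin n → ℝ) × (Fin n → ℝ) => y.2 i ^ 2)
      (((2:ℕ) * z.2 i ^ 1) • Ls i) z := fun i =>
    (hasDerivAt_pow 2 (z.2 i)).comp_hasFDerivAt (h₂ := fun x => x ^ 2) z (hsi i)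
  have hBj : ∀ j, HasFDerivAt (fun y : (Fin n → ℝ) × (Fin n → ℝ) => b j * (y.1 j ^ 2)⁻¹)
      ((b j * (-((2:ℕ) * z.1 j ^ 1) / (z.1 j ^ 2) ^ 2)) • Lf j) z := by
    intro j
    have h1 : HasDerivAt (fun y : ℝ => b j * (y ^ 2)⁻¹)
        (b j * (-((2:ℕ) * z.1 j ^ 1) / (z.1 j ^ 2) ^ 2)) (z.1 j) :=
      ((hasDerivAt_pow 2 (z.1 j)).inv (pow_ne_zero 2 (hz j))).const_mul (b j)
    exact h1.comp_hasFDerivAt (h₂ := fun y => b j * (y ^ 2)⁻¹) z (hfi j)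
  have hnum : HasFDerivAt
      (fun y : (Fin n → ℝ) × (Fin n → ℝ) =>
        (∑ i, y.2 i ^ 2) - c + ∑ j, b j * (y.1 j ^ 2)⁻¹)
      ((∑ i, ((2:ℕ) * z.2 i ^ 1) • Ls i) - 0
        + ∑ j, (b j * (-((2:ℕ) * z.1 j ^ 1) / (z.1 j ^ 2) ^ 2)) • Lf j) z := by
    exact ((HasFDerivAt.fun_sum fun i _ => hp2 i).sub (hasFDerivAt_const c z)).add
      (HasFDerivAt.fun_sum fun j _ => hBj j)
  have hden : HasFDerivAt (fun y : (Fin n → ℝ) × (Fin n → ℝ) => 2 * (κ + ∑ i, y.1 i ^ 2))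
      ((2:ℝ) • (0 + ∑ i, ((2:ℕ) * z.1 i ^ 1) • Lf i)) z := by
    exact (((hasFDerivAt_const κ z).add (HasFDerivAt.fun_sum fun i _ => hq2 i)).const_mul 2)
  have hdenne : 2 * (κ + ∑ i, z.1 i ^ 2) ≠ 0 := by positivity
  have hinv : HasFDerivAt (fun y : (Fin n → ℝ) × (Fin n → ℝ) =>
      (2 * (κ + ∑ i, y.1 i ^ 2))⁻¹)
      ((-((2 * (κ + ∑ i, z.1 i ^ 2)) ^ 2)⁻¹) • ((2:ℝ) • (0 + ∑ i, ((2:ℕ) * z.1 i ^ 1) • Lf i))) z := by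
    exact (hasDerivAt_inv hdenne).comp_hasFDerivAt z hden
  have hmul := hnum.mul hinv
  have hHd : HasFDerivAt H
      ((∑ i, z.2 i ^ 2 - c + ∑ j, b j * (z.1 j ^ 2)⁻¹) •
        -((2 * (κ + ∑ i, z.1 i ^ 2)) ^ 2)⁻¹ • (2:ℝ) • (0 + ∑ i, ((2:ℕ) * z.1 i ^ 1) • Lf i) +
      (2 * (κ + ∑ i, z.1 i ^ 2))⁻¹ •
        (∑ i, ((2:ℕ) * z.2 i ^ 1) • Ls i - 0 +
          ∑ j, (b j * (-((2:ℕ) * z.1 j ^ 1) / (z.1 j ^ 2) ^ 2)) • Lf j)) z := by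
    rw [hH]
    exact hmul
  refine ⟨_, hHd, ?_⟩
  intro w
  show _ = _
  simp only [ContinuousLinearMap.add_apply, ContinuousLinearMap.smul_apply,
    ContinuousLinearMap.sub_apply, ContinuousLinearMap.zero_apply,
    ContinuousLinearMap.sum_apply, ContinuousLinearMap.coe_comp',
    Function.comp_apply, ContinuousLinearMap.proj_apply,
    ContinuousLinearMap.coe_fst', ContinuousLinearMap.coe_snd', smul_eq_mul,
    Finset.mul_sum, hLf, hLs]
  have hA : ∑ x : Fin n, (2:ℕ) * z.1 x ^ 1 * w.1 x = 2 * ∑ i, z.1 i * w.1 i := by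
    rw [Finset.mul_sum]; exact Finset.sum_congr rfl fun i _ => by push_cast; ring
  have hB : ∑ x : Fin n, (2:ℕ) * z.2 x ^ 1 * w.2 x = 2 * ∑ i, z.2 i * w.2 i := by
    rw [Finset.mul_sum]; exact Finset.sum_congr rfl fun i _ => by push_cast; ring
  have hC : ∑ x : Fin n, b x * (-((2:ℕ) * z.1 x ^ 1) / (z.1 x ^ 2) ^ 2) * w.1 x
      = -2 * ∑ j, b j / z.1 j ^ 3 * w.1 j := by
    rw [Finset.mul_sum]
    refine Finset.sum_congr rfl fun i _ => ?_
    have := hz i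
    push_cast
    field_simp
  rw [← Finset.mul_sum, hA, hB, hC]
  have hxne : (κ + ∑ i, z.1 i ^ 2) ≠ 0 := ne_of_gt hx
  rw [← sub_eq_zero]
  field_simp
  ring

lemma H_fderiv_p (n : ℕ) (κ c : ℝ) (hκ : 0 < κ) (b : Fin n → ℝ)
    (H : (Fin n → ℝ) × (Fin n → ℝ) → ℝ)
    (hH : H = fun z =>
      ((∑ i, z.2 i ^ 2) - c + ∑ j, b j * (z.1 j ^ 2)⁻¹) / (2 * (κ + ∑ i, z.1 i ^ 2)))
    (z : (Fin n → ℝ) × (Fin n → ℝ)) (hz : ∀ i, z.1 i ≠ 0) (i : Fin n) :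
    fderiv ℝ H z (0, Pi.single i 1) = z.2 i / (κ + ∑ k, z.1 k ^ 2) := by
  obtain ⟨L, hL, happ⟩ := H_fderiv n κ c hκ b H hH z hz
  rw [hL.fderiv, happ]
  have h1 : ∑ k, z.2 k * ((0, (Pi.single i 1 : Fin n → ℝ)) : _ × _).2 k = z.2 i := by
    simp [Pi.single_apply, mul_ite, Finset.sum_ite_eq']
  rw [h1]
  simp

lemma H_fderiv_q (n : ℕ) (κ c : ℝ) (hκ : 0 < κ) (b : Fin n → ℝ)
    (H : (Fin n → ℝ) × (Fin n → ℝ) → ℝ)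
    (hH : H = fun z =>
      ((∑ i, z.2 i ^ 2) - c + ∑ j, b j * (z.1 j ^ 2)⁻¹) / (2 * (κ + ∑ i, z.1 i ^ 2)))
    (z : (Fin n → ℝ) × (Fin n → ℝ)) (hz : ∀ i, z.1 i ≠ 0) (i : Fin n) :
    -fderiv ℝ H z (Pi.single i 1, 0)
      = b i / (z.1 i ^ 3 * (κ + ∑ k, z.1 k ^ 2))
        + ((∑ k, z.2 k ^ 2) - c + ∑ j, b j * (z.1 j ^ 2)⁻¹) * z.1 i
          / (κ + ∑ k, z.1 k ^ 2) ^ 2 := by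
  obtain ⟨L, hL, happ⟩ := H_fderiv n κ c hκ b H hH z hz
  rw [hL.fderiv, happ]
  have h1 : ∑ j, b j / z.1 j ^ 3 * (((Pi.single i 1 : Fin n → ℝ), (0:Fin n → ℝ)) : _ × _).1 j
      = b i / z.1 i ^ 3 := by
    simp [Pi.single_apply, mul_ite, Finset.sum_ite_eq']
  have h2 : ∑ k, z.1 k * (((Pi.single i 1 : Fin n → ℝ), (0:Fin n → ℝ)) : _ × _).1 k
      = z.1 i := by
    simp [Pi.single_apply, mul_ite, Finset.sum_ite_eq']
  have h3 : ∑ k, z.2 k * (((Pi.single i 1 : Fin n → ℝ), (0:Fin n → ℝ)) : _ × _).2 k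
      = 0 := by simp
  rw [h1, h2, h3]
  have hx : (0:ℝ) < κ + ∑ k, z.1 k ^ 2 := by positivity
  have hxne := hx.ne'
  have hqne := hz i
  field_simp
  ring

lemma const_on_Ioo {f : ℝ → ℝ} {a b : ℝ} (h : ∀ s ∈ Set.Ioo a b, HasDerivAt f 0 s)
    {t u : ℝ} (ht : t ∈ Set.Ioo a b) (hu : u ∈ Set.Ioo a b) (hle : u ≤ t) : f t = f u := by
  have hsub : Set.Icc u t ⊆ Set.Ioo a b := Set.Icc_subset_Ioo hu.1 ht.2
  have := constant_of_has_deriv_right_zero (f := f) (a := u) (b := t)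
    (fun s hs => ((h s (hsub hs)).continuousAt.continuousWithinAt))
    (fun s hs => (h s (hsub (Set.Ico_subset_Icc_self hs))).hasDerivWithinAt)
  exact this t (Set.right_mem_Icc.2 hle)

/-- With x = κ + |q|², E = 2H > 0, C the Casimir, α = (κ − c/E)/2 and
γ² = (κ + c/E)²/4 + C/E, one has (p·q)² = E[(x − α)² − γ²]; consequently,
along solutions of Hamilton's equations with energy E = 2h > 0, the radial
variable x(t) = κ + |q(t)|² obeys x²ẋ² = 4E[(x − α)² − γ²]. -/
theorem radial_equation (n : ℕ) (hn : 1 ≤ n) (κ c : ℝ) (hκ : 0 < κ)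
    (b : Fin n → ℝ)
    (H : (Fin n → ℝ) × (Fin n → ℝ) → ℝ)
    (hH : H = fun z =>
      ((∑ i, z.2 i ^ 2) - c + ∑ j, b j * (z.1 j ^ 2)⁻¹) / (2 * (κ + ∑ i, z.1 i ^ 2)))
    (Cas : (Fin n → ℝ) × (Fin n → ℝ) → ℝ)
    (hCas : Cas = fun z =>
      (∑ i, z.1 i ^ 2) * ((∑ i, z.2 i ^ 2) + ∑ j, b j * (z.1 j ^ 2)⁻¹)
        - (∑ i, z.2 i * z.1 i) ^ 2) :
    -- (1) pointwise identity
    (∀ z : (Fin n → ℝ) × (Fin n → ℝ), (∀ i, z.1 i ≠ 0) →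
      ∀ E : ℝ, E = 2 * H z → 0 < E →
        (∑ i, z.2 i * z.1 i) ^ 2
          = E * (((κ + ∑ i, z.1 i ^ 2) - (κ - c / E) / 2) ^ 2
              - ((κ + c / E) ^ 2 / 4 + Cas z / E))) ∧
    -- (2) consequence along solutions of Hamilton's equations
    (∀ t₀ t₁ : ℝ, t₀ < 0 → 0 < t₁ →
      ∀ q p : ℝ → Fin n → ℝ,
        (∀ t ∈ Set.Ioo t₀ t₁, ∀ i, q t i ≠ 0) →
        (∀ t ∈ Set.Ioo t₀ t₁, ∀ i,
          HasDerivAt (fun s => q s i) (fderiv ℝ H (q t, p t) (0, Pi.single i 1)) t) →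
        (∀ t ∈ Set.Ioo t₀ t₁, ∀ i,
          HasDerivAt (fun s => p s i) (-fderiv ℝ H (q t, p t) (Pi.single i 1, 0)) t) →
        ∀ E : ℝ, E = 2 * H (q 0, p 0) → 0 < E →
          ∀ α γsq : ℝ, α = (κ - c / E) / 2 →
            γsq = (κ + c / E) ^ 2 / 4 + Cas (q 0, p 0) / E →
            ∀ t ∈ Set.Ioo t₀ t₁,
              (κ + ∑ k, q t k ^ 2) ^ 2 * (deriv (fun s => κ + ∑ k, q s k ^ 2) t) ^ 2
                = 4 * E * (((κ + ∑ k, q t k ^ 2) - α) ^ 2 - γsq)) := by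
  have part1 : ∀ z : (Fin n → ℝ) × (Fin n → ℝ), (∀ i, z.1 i ≠ 0) →
      ∀ E : ℝ, E = 2 * H z → 0 < E →
        (∑ i, z.2 i * z.1 i) ^ 2
          = E * (((κ + ∑ i, z.1 i ^ 2) - (κ - c / E) / 2) ^ 2
              - ((κ + c / E) ^ 2 / 4 + Cas z / E)) := by
    intro z hz E hE hEpos
    have hx : (0:ℝ) < κ + ∑ i, z.1 i ^ 2 := by positivity
    rw [hH] at hE
    simp only at hE
    have hxne := hx.ne'
    have hB0 : (∑ i, z.2 i ^ 2) - c + ∑ j, b j * (z.1 j ^ 2)⁻¹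
        = E * (κ + ∑ i, z.1 i ^ 2) := by
      rw [hE]; field_simp
    have hB : ∑ j, b j * (z.1 j ^ 2)⁻¹
        = E * (κ + ∑ i, z.1 i ^ 2) - (∑ i, z.2 i ^ 2) + c := by linarith
    rw [hCas]
    simp only
    rw [hB]
    have hEne := hEpos.ne'
    field_simp
    ring
  refine ⟨part1, ?_⟩
  intro t₀ t₁ ht₀ ht₁ q p hq0 hqd hpd E hE hEpos α γsq hα hγ t ht
  have h0mem : (0:ℝ) ∈ Set.Ioo t₀ t₁ := ⟨ht₀, ht₁⟩
  have hxp : ∀ s : ℝ, (0:ℝ) < κ + ∑ k, q s k ^ 2 := fun s => by positivity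
  -- Hamilton's equations in explicit form
  have hq' : ∀ s ∈ Set.Ioo t₀ t₁, ∀ i, HasDerivAt (fun u => q u i)
      (p s i / (κ + ∑ k, q s k ^ 2)) s := by
    intro s hs i
    have h := hqd s hs i
    rw [H_fderiv_p n κ c hκ b H hH (q s, p s) (hq0 s hs) i] at h
    exact h
  have hp' : ∀ s ∈ Set.Ioo t₀ t₁, ∀ i, HasDerivAt (fun u => p u i)
      (b i / (q s i ^ 3 * (κ + ∑ k, q s k ^ 2))
        + ((∑ k, p s k ^ 2) - c + ∑ j, b j * (q s j ^ 2)⁻¹) * q s i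
          / (κ + ∑ k, q s k ^ 2) ^ 2) s := by
    intro s hs i
    have h := hpd s hs i
    rw [H_fderiv_q n κ c hκ b H hH (q s, p s) (hq0 s hs) i] at h
    exact h
  -- energy conservation
  have hEcons : ∀ s ∈ Set.Ioo t₀ t₁, HasDerivAt (fun u => H (q u, p u)) 0 s := by
    intro s hs
    obtain ⟨L, hL, happ⟩ := H_fderiv n κ c hκ b H hH (q s, p s) (hq0 s hs)
    have hcurve : HasDerivAt (fun u => (q u, p u))
        ((fun i => p s i / (κ + ∑ k, q s k ^ 2)),
         (fun i => b i / (q s i ^ 3 * (κ + ∑ k, q s k ^ 2))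
           + ((∑ k, p s k ^ 2) - c + ∑ j, b j * (q s j ^ 2)⁻¹) * q s i
             / (κ + ∑ k, q s k ^ 2) ^ 2)) s :=
      HasDerivAt.prodMk (hasDerivAt_pi.2 fun i => hq' s hs i)
        (hasDerivAt_pi.2 fun i => hp' s hs i)
    have h2 := hL.comp_hasDerivAt s hcurve
    refine h2.congr_deriv (Eq.symm ?_)
    rw [happ]
    simp only
    rw [Finset.sum_div, Finset.sum_div, Finset.mul_sum,
      ← Finset.sum_sub_distrib, ← Finset.sum_sub_distrib]
    symm
    apply Finset.sum_eq_zero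
    intro i _
    have hxne := (hxp s).ne'
    have hqne := hq0 s hs i
    field_simp
    ring
  -- Casimir conservation
  have hCcons : ∀ s ∈ Set.Ioo t₀ t₁, HasDerivAt (fun u => Cas (q u, p u)) 0 s := by
    intro s hs
    have hxne := (hxp s).ne'
    have hQ : HasDerivAt (fun u => ∑ k, q u k ^ 2)
        (∑ k, (2:ℕ) * q s k ^ 1 * (p s k / (κ + ∑ k, q s k ^ 2))) s :=
      HasDerivAt.fun_sum fun k _ => (hq' s hs k).pow 2
    have hP : HasDerivAt (fun u => ∑ k, p u k ^ 2)
        (∑ k, (2:ℕ) * p s k ^ 1 * (b k / (q s k ^ 3 * (κ + ∑ k, q s k ^ 2))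
          + ((∑ k, p s k ^ 2) - c + ∑ j, b j * (q s j ^ 2)⁻¹) * q s k
            / (κ + ∑ k, q s k ^ 2) ^ 2)) s :=
      HasDerivAt.fun_sum fun k _ => (hp' s hs k).pow 2
    have hBd : HasDerivAt (fun u => ∑ j, b j * (q u j ^ 2)⁻¹)
        (∑ j, b j * (-((2:ℕ) * q s j ^ 1 * (p s j / (κ + ∑ k, q s k ^ 2)))
          / (q s j ^ 2) ^ 2)) s :=
      HasDerivAt.fun_sum fun j _ =>
        (((hq' s hs j).pow 2).inv (pow_ne_zero 2 (hq0 s hs j))).const_mul (b j)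
    have hS : HasDerivAt (fun u => ∑ i, p u i * q u i)
        (∑ i, ((b i / (q s i ^ 3 * (κ + ∑ k, q s k ^ 2))
          + ((∑ k, p s k ^ 2) - c + ∑ j, b j * (q s j ^ 2)⁻¹) * q s i
            / (κ + ∑ k, q s k ^ 2) ^ 2) * q s i
          + p s i * (p s i / (κ + ∑ k, q s k ^ 2)))) s :=
      HasDerivAt.fun_sum fun i _ => (hp' s hs i).mul (hq' s hs i)
    have hC := (hQ.mul (hP.add hBd)).sub (hS.pow 2)
    have hfun : (fun u => Cas (q u, p u)) = fun u =>
        (∑ k, q u k ^ 2) * ((∑ k, p u k ^ 2) + ∑ j, b j * (q u j ^ 2)⁻¹)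
          - (∑ i, p u i * q u i) ^ 2 := by rw [hCas]
    rw [hfun]
    refine hC.congr_deriv (Eq.symm ?_)
    symm
    have e1 : ∑ k, (2:ℕ) * q s k ^ 1 * (p s k / (κ + ∑ k, q s k ^ 2))
        = (∑ i, p s i * q s i) * (2 / (κ + ∑ k, q s k ^ 2)) := by
      conv_rhs => rw [Finset.sum_mul]
      exact Finset.sum_congr rfl fun k _ => by push_cast; ring
    have e2 : (∑ k, (2:ℕ) * p s k ^ 1 * (b k / (q s k ^ 3 * (κ + ∑ k, q s k ^ 2))
          + ((∑ k, p s k ^ 2) - c + ∑ j, b j * (q s j ^ 2)⁻¹) * q s k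
            / (κ + ∑ k, q s k ^ 2) ^ 2))
        + ∑ j, b j * (-((2:ℕ) * q s j ^ 1 * (p s j / (κ + ∑ k, q s k ^ 2)))
          / (q s j ^ 2) ^ 2)
        = (∑ i, p s i * q s i)
          * (2 * ((∑ k, p s k ^ 2) - c + ∑ j, b j * (q s j ^ 2)⁻¹)
            / (κ + ∑ k, q s k ^ 2) ^ 2) := by
      conv_rhs => rw [Finset.sum_mul]
      rw [← Finset.sum_add_distrib]
      refine Finset.sum_congr rfl fun k _ => ?_
      have hqne := hq0 s hs k
      push_cast
      field_simp
      ring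
    have e3 : ∑ i, ((b i / (q s i ^ 3 * (κ + ∑ k, q s k ^ 2))
          + ((∑ k, p s k ^ 2) - c + ∑ j, b j * (q s j ^ 2)⁻¹) * q s i
            / (κ + ∑ k, q s k ^ 2) ^ 2) * q s i
          + p s i * (p s i / (κ + ∑ k, q s k ^ 2)))
        = (∑ j, b j * (q s j ^ 2)⁻¹) / (κ + ∑ k, q s k ^ 2)
          + ((∑ k, p s k ^ 2) - c + ∑ j, b j * (q s j ^ 2)⁻¹) * (∑ k, q s k ^ 2)
            / (κ + ∑ k, q s k ^ 2) ^ 2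
          + (∑ k, p s k ^ 2) / (κ + ∑ k, q s k ^ 2) := by
      conv_rhs => rw [Finset.sum_div, Finset.mul_sum, Finset.sum_div, Finset.sum_div,
        ← Finset.sum_add_distrib, ← Finset.sum_add_distrib]
      refine Finset.sum_congr rfl fun i _ => ?_
      have hqne := hq0 s hs i
      have key3 : ∀ B F X Qi P : ℝ, Qi ≠ 0 → X ≠ 0 →
          (B / (Qi ^ 3 * X) + F * Qi / X ^ 2) * Qi + P * (P / X)
            = B * (Qi ^ 2)⁻¹ / X + F * Qi ^ 2 / X ^ 2 + P ^ 2 / X := by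
        intros B F X Qi P h1 h2; field_simp
      exact key3 _ _ _ _ _ hqne hxne
    rw [e1, e2, e3]
    simp only [Pi.add_apply]
    push_cast
    ring
  -- constancy along the interval
  have hconst : ∀ f : ℝ → ℝ, (∀ s ∈ Set.Ioo t₀ t₁, HasDerivAt f 0 s) → f t = f 0 := by
    intro f hf
    rcases le_total 0 t with h | h
    · exact const_on_Ioo hf ht h0mem h
    · exact (const_on_Ioo hf h0mem ht h).symm
  have hHconst : H (q t, p t) = H (q 0, p 0) := hconst _ hEcons
  have hCconst : Cas (q t, p t) = Cas (q 0, p 0) := hconst _ hCcons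
  -- derivative of x(t)
  have hXd : HasDerivAt (fun u => κ + ∑ k, q u k ^ 2)
      (∑ k, (2:ℕ) * q t k ^ 1 * (p t k / (κ + ∑ k, q t k ^ 2))) t :=
    (HasDerivAt.fun_sum fun k _ => (hq' t ht k).pow 2).const_add κ
  have hder : deriv (fun s => κ + ∑ k, q s k ^ 2) t
      = (∑ i, p t i * q t i) * (2 / (κ + ∑ k, q t k ^ 2)) := by
    rw [hXd.deriv]
    conv_rhs => rw [Finset.sum_mul]
    exact Finset.sum_congr rfl fun k _ => by push_cast; ring
  -- apply the pointwise identity at time t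
  have hEt : E = 2 * H (q t, p t) := by rw [hE, hHconst]
  have key := part1 (q t, p t) (hq0 t ht) E hEt hEpos
  simp only at key
  rw [hCconst] at key
  rw [← hα, ← hγ] at key
  rw [hder]
  have hxne := (hxp t).ne'
  calc (κ + ∑ k, q t k ^ 2) ^ 2
        * ((∑ i, p t i * q t i) * (2 / (κ + ∑ k, q t k ^ 2))) ^ 2
      = 4 * (∑ i, p t i * q t i) ^ 2 := by field_simp; ring
    _ = 4 * E * (((κ + ∑ k, q t k ^ 2) - α) ^ 2 - γsq) := by rw [key]; ring
end
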